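/- arXiv:2408.00241 — 7 statements merged into one kernel-verified Lean document; each statement's English description precedes it below -/
import Mathlib

section
/- Let H̃ be a symmetric d×d block matrix with blocks H_xx (of size n×n), H_xy, and H_yy (of size m×m), such that H_xx ⪰ μI and H_yy ⪯ −μI for some μ > 0, and ‖H̃‖ ≤ L (spectral norm). Then the squared matrix H = H̃² satisfies μ²I ⪯ H ⪯ L²I. -/
open Matrix

/-- Spectral (operator) norm of a real square matrix. -/
noncomputable def matSpectralNorm {d : Type*} [Fintype d] [DecidableEq d]
    (A : Matrix d d ℝ) : ℝ :=
  ‖Matrix.toEuclideanCLM (𝕜 := ℝ) A‖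

/-!
For the upper bound, `vᵀ H̃² v = ‖H̃ v‖² ≤ L² ‖v‖²`. For the lower bound, flip the sign of the
`y`-block of `v = (x, y)`: with `Jv = (x, -y)` the cross terms cancel and
`⟪H̃ v, J v⟫ = xᵀ H_xx x - yᵀ H_yy y ≥ μ ‖v‖²`, so expanding `0 ≤ ‖H̃ v - μ J v‖²` with
`‖J v‖ = ‖v‖` gives `‖H̃ v‖² ≥ μ² ‖v‖²`.
-/

section
variable {ι : Type*} [Fintype ι]

lemma norm_toLp_sq (v : ι → ℝ) : ‖WithLp.toLp 2 v‖ ^ 2 = v ⬝ᵥ v := by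
  rw [← real_inner_self_eq_norm_sq, EuclideanSpace.inner_toLp_toLp, star_trivial]

lemma mulVec_dotProduct_self_le [DecidableEq ι] {A : Matrix ι ι ℝ} {L : ℝ}
    (hA : matSpectralNorm A ≤ L) (v : ι → ℝ) :
    (A *ᵥ v) ⬝ᵥ (A *ᵥ v) ≤ L ^ 2 * (v ⬝ᵥ v) := by
  have hle : ‖WithLp.toLp 2 (A *ᵥ v)‖ ≤ L * ‖WithLp.toLp 2 v‖ :=
    ((toEuclideanCLM (𝕜 := ℝ) A).le_opNorm _).trans (by unfold matSpectralNorm at hA; gcongr)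
  rw [← norm_toLp_sq, ← norm_toLp_sq, ← mul_pow]
  exact pow_le_pow_left₀ (norm_nonneg _) hle 2

lemma sq_mul_dotProduct_self_le {u v w : ι → ℝ} {μ : ℝ} (hμ : 0 ≤ μ)
    (hw : w ⬝ᵥ w = v ⬝ᵥ v) (h : μ * (v ⬝ᵥ v) ≤ u ⬝ᵥ w) :
    μ ^ 2 * (v ⬝ᵥ v) ≤ u ⬝ᵥ u := by
  have hsq : 0 ≤ (u - μ • w) ⬝ᵥ (u - μ • w) := by
    simpa using dotProduct_star_self_nonneg (u - μ • w)
  simp only [sub_dotProduct, dotProduct_sub, smul_dotProduct, dotProduct_smul, smul_eq_mul,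
    dotProduct_comm w u, hw] at hsq
  nlinarith

lemma Matrix.PosSemidef.mul_dotProduct_self_le [DecidableEq ι] {A : Matrix ι ι ℝ} {μ : ℝ}
    (h : (A - μ • 1).PosSemidef) (x : ι → ℝ) : μ * (x ⬝ᵥ x) ≤ x ⬝ᵥ (A *ᵥ x) := by
  have := h.dotProduct_mulVec_nonneg x
  simp only [star_trivial, sub_mulVec, smul_mulVec, one_mulVec, dotProduct_sub,
    dotProduct_smul, smul_eq_mul] at this
  linarith

namespace Matrix.IsSymm
variable [DecidableEq ι] {A : Matrix ι ι ℝ}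

lemma dotProduct_sq_mulVec (hA : A.IsSymm) (v : ι → ℝ) :
    v ⬝ᵥ (A ^ 2 *ᵥ v) = (A *ᵥ v) ⬝ᵥ (A *ᵥ v) := by
  rw [sq, ← mulVec_mulVec, dotProduct_mulVec, ← mulVec_transpose, hA.eq]

variable {c : ℝ}

lemma posSemidef_sq_sub_smul_one (hA : A.IsSymm)
    (h : ∀ v, c * (v ⬝ᵥ v) ≤ (A *ᵥ v) ⬝ᵥ (A *ᵥ v)) : (A ^ 2 - c • 1).PosSemidef := by
  refine .of_dotProduct_mulVec_nonneg ?_ fun v => ?_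
  · exact ((hA.pow 2).sub (isSymm_one.smul c) : (A ^ 2 - c • 1).IsSymm)
  · simp only [star_trivial, sub_mulVec, smul_mulVec, one_mulVec, dotProduct_sub,
      dotProduct_smul, smul_eq_mul, hA.dotProduct_sq_mulVec]
    linarith [h v]

lemma posSemidef_smul_one_sub_sq (hA : A.IsSymm)
    (h : ∀ v, (A *ᵥ v) ⬝ᵥ (A *ᵥ v) ≤ c * (v ⬝ᵥ v)) : (c • 1 - A ^ 2).PosSemidef := by
  refine .of_dotProduct_mulVec_nonneg ?_ fun v => ?_
  · exact (((isSymm_one.smul c).sub (hA.pow 2)) : (c • 1 - A ^ 2).IsSymm)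
  · simp only [star_trivial, sub_mulVec, smul_mulVec, one_mulVec, dotProduct_sub,
      dotProduct_smul, smul_eq_mul, hA.dotProduct_sq_mulVec]
    linarith [h v]

end Matrix.IsSymm
end

section
variable {m n : Type*} [Fintype m] [Fintype n]

lemma fromBlocks_mulVec_dotProduct_signed (A : Matrix m m ℝ) (B : Matrix m n ℝ)
    (D : Matrix n n ℝ) (x : m → ℝ) (y : n → ℝ) :
    (fromBlocks A B Bᵀ D *ᵥ Sum.elim x y) ⬝ᵥ Sum.elim x (-y) =
      x ⬝ᵥ (A *ᵥ x) - y ⬝ᵥ (D *ᵥ y) := by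
  simp only [fromBlocks_mulVec, dotProduct_block, Sum.elim_comp_inl, Sum.elim_comp_inr,
    add_dotProduct, dotProduct_neg, mulVec_transpose, ← dotProduct_mulVec]
  rw [dotProduct_comm (A *ᵥ x), dotProduct_comm (D *ᵥ y), dotProduct_comm (B *ᵥ y)]
  ring

lemma sq_mul_dotProduct_self_le_fromBlocks_mulVec [DecidableEq m] [DecidableEq n]
    {A : Matrix m m ℝ} (B : Matrix m n ℝ) {D : Matrix n n ℝ} {μ : ℝ} (hμ : 0 ≤ μ)
    (hA : (A - μ • 1).PosSemidef) (hD : (-D - μ • 1).PosSemidef) (v : m ⊕ n → ℝ) :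
    μ ^ 2 * (v ⬝ᵥ v) ≤ (fromBlocks A B Bᵀ D *ᵥ v) ⬝ᵥ (fromBlocks A B Bᵀ D *ᵥ v) := by
  obtain ⟨x, y, rfl⟩ : ∃ x y, v = Sum.elim x y := ⟨_, _, (Sum.elim_comp_inl_inr v).symm⟩
  have hv : Sum.elim x y ⬝ᵥ Sum.elim x y = x ⬝ᵥ x + y ⬝ᵥ y := dotProduct_block _ _
  refine sq_mul_dotProduct_self_le hμ (w := Sum.elim x (-y)) ?_ ?_
  · simp [hv, dotProduct_block]
  · have hx := hA.mul_dotProduct_self_le x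
    have hy := hD.mul_dotProduct_self_le y
    rw [neg_mulVec, dotProduct_neg] at hy
    rw [fromBlocks_mulVec_dotProduct_signed, hv]
    linarith
end

theorem squared_hessian_bounds_general {n m : ℕ} (μ L : ℝ) (hμ : 0 < μ)
    (Hxx : Matrix (Fin n) (Fin n) ℝ) (Hxy : Matrix (Fin n) (Fin m) ℝ)
    (Hyy : Matrix (Fin m) (Fin m) ℝ)
    (hxx : Hxx.IsSymm) (hyy : Hyy.IsSymm)
    (hxxμ : (Hxx - μ • (1 : Matrix (Fin n) (Fin n) ℝ)).PosSemidef)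
    (hyyμ : (-Hyy - μ • (1 : Matrix (Fin m) (Fin m) ℝ)).PosSemidef)
    (hnorm : matSpectralNorm (Matrix.fromBlocks Hxx Hxy Hxyᵀ Hyy) ≤ L) :
    ((Matrix.fromBlocks Hxx Hxy Hxyᵀ Hyy) ^ 2
        - μ ^ 2 • (1 : Matrix (Fin n ⊕ Fin m) (Fin n ⊕ Fin m) ℝ)).PosSemidef ∧
    (L ^ 2 • (1 : Matrix (Fin n ⊕ Fin m) (Fin n ⊕ Fin m) ℝ)
        - (Matrix.fromBlocks Hxx Hxy Hxyᵀ Hyy) ^ 2).PosSemidef := by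
  have hH : (fromBlocks Hxx Hxy Hxyᵀ Hyy).IsSymm := .fromBlocks hxx rfl hyy
  exact ⟨hH.posSemidef_sq_sub_smul_one
      (sq_mul_dotProduct_self_le_fromBlocks_mulVec Hxy hμ.le hxxμ hyyμ),
    hH.posSemidef_smul_one_sub_sq (mulVec_dotProduct_self_le hnorm)⟩

/-- if the symmetric block matrix H̃ = [[Hxx, Hxy],[Hxyᵀ, Hyy]] satisfies
Hxx ⪰ μI, Hyy ⪯ −μI and ‖H̃‖ ≤ L with 0 < μ ≤ L, then μ²I ⪯ H̃² ⪯ L²I. -/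
theorem squared_hessian_bounds {n m : ℕ} (μ L : ℝ) (hμ : 0 < μ) (hμL : μ ≤ L)
    (Hxx : Matrix (Fin n) (Fin n) ℝ) (Hxy : Matrix (Fin n) (Fin m) ℝ)
    (Hyy : Matrix (Fin m) (Fin m) ℝ)
    (hxx : Hxx.IsSymm) (hyy : Hyy.IsSymm)
    (hxxμ : (Hxx - μ • (1 : Matrix (Fin n) (Fin n) ℝ)).PosSemidef)
    (hyyμ : (-Hyy - μ • (1 : Matrix (Fin m) (Fin m) ℝ)).PosSemidef)
    (hnorm : matSpectralNorm (Matrix.fromBlocks Hxx Hxy Hxyᵀ Hyy) ≤ L) :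
    ((Matrix.fromBlocks Hxx Hxy Hxyᵀ Hyy) ^ 2
        - μ ^ 2 • (1 : Matrix (Fin n ⊕ Fin m) (Fin n ⊕ Fin m) ℝ)).PosSemidef ∧
    (L ^ 2 • (1 : Matrix (Fin n ⊕ Fin m) (Fin n ⊕ Fin m) ℝ)
        - (Matrix.fromBlocks Hxx Hxy Hxyᵀ Hyy) ^ 2).PosSemidef :=
  squared_hessian_bounds_general μ L hμ Hxx Hxy Hyy hxx hyy hxxμ hyyμ hnorm
end

section
/- Let Q and H be symmetric positive definite d×d matrices with H ⪯ Q, and let u ∈ ℝᵈ satisfy (Q−H)u ≠ 0. Then the SR1 update SR1(Q,H,u) = Q − ((Q−H)uuᵀ(Q−H))/(uᵀ(Q−H)u) satisfies H ⪯ SR1(Q,H,u) ⪯ Q. -/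
/-!
Write `A = Q - H ⪰ 0` and `v = A u`. Then `Q - SR1 Q H u = vvᵀ / uᵀAu` is positive semidefinite,
and `SR1 Q H u - H = A - vvᵀ / uᵀAu` has quadratic form `xᵀAx - (uᵀAx)² / uᵀAu`, which is
nonnegative by the Cauchy–Schwarz inequality for the semi-inner product `⟨x, y⟩ = xᵀAy`.
-/

open Matrix

/-- The SR1 (symmetric rank-one) update. -/
noncomputable def SR1 {d : ℕ} (Q H : Matrix (Fin d) (Fin d) ℝ) (u : Fin d → ℝ) :
    Matrix (Fin d) (Fin d) ℝ :=
  Q - (u ⬝ᵥ (Q - H).mulVec u)⁻¹ • vecMulVec ((Q - H).mulVec u) ((Q - H).mulVec u)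

namespace Matrix

variable {n : Type*} [Fintype n] {A : Matrix n n ℝ}

theorem IsHermitian.mulVec_dotProduct (hA : A.IsHermitian) (u x : n → ℝ) :
    A *ᵥ u ⬝ᵥ x = u ⬝ᵥ A *ᵥ x := by
  rw [dotProduct_mulVec, ← mulVec_transpose, ← conjTranspose_eq_transpose_of_trivial, hA.eq]

theorem posSemidef_vecMulVec_self (v : n → ℝ) : (vecMulVec v v).PosSemidef := by
  simpa using posSemidef_vecMulVec_self_star v

namespace PosSemidef

theorem dotProduct_mulVec_sq_le (hA : A.PosSemidef) (x y : n → ℝ) :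
    (x ⬝ᵥ A *ᵥ y) ^ 2 ≤ (x ⬝ᵥ A *ᵥ x) * (y ⬝ᵥ A *ᵥ y) := by
  let := A.toSeminormedAddCommGroup hA
  let := A.toInnerProductSpace hA
  have h : (A *ᵥ y ⬝ᵥ star x) * (A *ᵥ y ⬝ᵥ star x) ≤ (A *ᵥ x ⬝ᵥ star x) * (A *ᵥ y ⬝ᵥ star y) :=
    real_inner_mul_inner_self_le x y
  simpa only [star_trivial, dotProduct_comm _ x, dotProduct_comm _ y, sq] using h

theorem inv_smul_vecMulVec_mulVec (hA : A.PosSemidef) (u : n → ℝ) :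
    ((u ⬝ᵥ A *ᵥ u)⁻¹ • vecMulVec (A *ᵥ u) (A *ᵥ u)).PosSemidef :=
  (posSemidef_vecMulVec_self _).smul (inv_nonneg.2 (by simpa using hA.dotProduct_mulVec_nonneg u))

theorem sub_inv_smul_vecMulVec_mulVec (hA : A.PosSemidef) (u : n → ℝ) :
    (A - (u ⬝ᵥ A *ᵥ u)⁻¹ • vecMulVec (A *ᵥ u) (A *ᵥ u)).PosSemidef := by
  refine .of_dotProduct_mulVec_nonneg (hA.1.sub (hA.inv_smul_vecMulVec_mulVec u).1) fun x => ?_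
  have hu : 0 ≤ u ⬝ᵥ A *ᵥ u := by simpa using hA.dotProduct_mulVec_nonneg u
  have hx : 0 ≤ x ⬝ᵥ A *ᵥ x := by simpa using hA.dotProduct_mulVec_nonneg x
  rw [star_trivial, sub_mulVec, dotProduct_sub, sub_nonneg, smul_mulVec, vecMulVec_mulVec,
    op_smul_eq_smul, smul_smul, dotProduct_smul, smul_eq_mul, dotProduct_comm x,
    hA.1.mulVec_dotProduct, mul_assoc, ← sq]
  exact inv_mul_le_of_le_mul₀ hu hx (hA.dotProduct_mulVec_sq_le u x)

end PosSemidef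

end Matrix

theorem sr1_between_general {d : ℕ} (Q H : Matrix (Fin d) (Fin d) ℝ) (u : Fin d → ℝ)
    (hQH : (Q - H).PosSemidef) :
    (SR1 Q H u - H).PosSemidef ∧ (Q - SR1 Q H u).PosSemidef := by
  constructor
  · convert hQH.sub_inv_smul_vecMulVec_mulVec u using 1
    rw [SR1]
    abel
  · rw [SR1, sub_sub_cancel]
    exact hQH.inv_smul_vecMulVec_mulVec u

/-- if H ⪯ Q (both symmetric positive definite) and (Q−H)u ≠ 0,
then H ⪯ SR1(Q,H,u) ⪯ Q. -/
theorem sr1_between {d : ℕ} (Q H : Matrix (Fin d) (Fin d) ℝ) (u : Fin d → ℝ)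
    (hQ : Q.PosDef) (hH : H.PosDef) (hQH : (Q - H).PosSemidef)
    (hu : (Q - H).mulVec u ≠ 0) :
    (SR1 Q H u - H).PosSemidef ∧ (Q - SR1 Q H u).PosSemidef :=
  sr1_between_general Q H u hQH
end

section
/- Let Q and H be symmetric positive definite d×d matrices with H ⪯ Q ⪯ ηH for some η ≥ 1, and let u ∈ ℝᵈ with (Q−H)u ≠ 0. Then the SR1 update Q⁺ = SR1(Q,H,u) also satisfies H ⪯ Q⁺ ⪯ ηH. -/
open Matrix

namespace Matrix

variable {n : Type*} [Fintype n]

lemma PosSemidef.dotProduct_mulVec_self_nonneg {A : Matrix n n ℝ} (hA : A.PosSemidef)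
    (x : n → ℝ) : 0 ≤ x ⬝ᵥ A *ᵥ x := by
  simpa using hA.dotProduct_mulVec_nonneg x

lemma PosSemidef.dotProduct_mulVec_mul_self_le {A : Matrix n n ℝ} (hA : A.PosSemidef)
    (x y : n → ℝ) :
    (x ⬝ᵥ A *ᵥ y) * (x ⬝ᵥ A *ᵥ y) ≤ (x ⬝ᵥ A *ᵥ x) * (y ⬝ᵥ A *ᵥ y) := by
  let _ := A.toSeminormedAddCommGroup hA
  let _ := A.toInnerProductSpace hA
  have h_inner (v w : n → ℝ) : inner ℝ v w = v ⬝ᵥ A *ᵥ w := dotProduct_comm _ _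
  simpa only [h_inner] using real_inner_mul_inner_self_le x y

lemma dotProduct_vecMulVec_self_mulVec (v x : n → ℝ) :
    x ⬝ᵥ vecMulVec v v *ᵥ x = (x ⬝ᵥ v) * (x ⬝ᵥ v) := by
  rw [vecMulVec_mulVec, op_smul_eq_smul, dotProduct_smul, smul_eq_mul, dotProduct_comm v,
    mul_comm]

lemma posSemidef_smul_vecMulVec_self {c : ℝ} (hc : 0 ≤ c) (v : n → ℝ) :
    (c • vecMulVec v v).PosSemidef := by
  simpa using (posSemidef_vecMulVec_self_star v).smul hc

/-- When `uᵀAu = 0`, Lean's `(uᵀAu)⁻¹ = 0` makes this matrix `A` itself. -/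
lemma PosSemidef.sub_smul_vecMulVec_mulVec {A : Matrix n n ℝ} (hA : A.PosSemidef)
    (u : n → ℝ) :
    (A - (u ⬝ᵥ A *ᵥ u)⁻¹ • vecMulVec (A *ᵥ u) (A *ᵥ u)).PosSemidef := by
  set α := u ⬝ᵥ A *ᵥ u
  have hα : 0 ≤ α := hA.dotProduct_mulVec_self_nonneg u
  refine .of_dotProduct_mulVec_nonneg
    (hA.isHermitian.sub (posSemidef_smul_vecMulVec_self (inv_nonneg.2 hα) _).isHermitian)
    fun x => ?_
  rw [star_trivial, sub_mulVec, dotProduct_sub, smul_mulVec, dotProduct_smul, smul_eq_mul,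
    dotProduct_vecMulVec_self_mulVec, sub_nonneg]
  rcases hα.eq_or_lt with hα0 | hαpos
  · simpa [← hα0] using hA.dotProduct_mulVec_self_nonneg x
  · rw [inv_mul_le_iff₀ hαpos, mul_comm α]
    exact hA.dotProduct_mulVec_mul_self_le x u

end Matrix

theorem sr1_preserves_sandwich_general {d : ℕ} (Q H : Matrix (Fin d) (Fin d) ℝ) (u : Fin d → ℝ)
    (η : ℝ)
    (hQH : (Q - H).PosSemidef) (hηH : (η • H - Q).PosSemidef) :
    (SR1 Q H u - H).PosSemidef ∧ (η • H - SR1 Q H u).PosSemidef := by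
  constructor
  · rw [SR1, sub_right_comm]
    exact hQH.sub_smul_vecMulVec_mulVec u
  · rw [SR1, ← sub_add]
    exact hηH.add <| posSemidef_smul_vecMulVec_self
      (inv_nonneg.2 (hQH.dotProduct_mulVec_self_nonneg u)) _

/-- the SR1 update preserves the sandwich H ⪯ Q ⪯ ηH. -/
theorem sr1_preserves_sandwich {d : ℕ} (Q H : Matrix (Fin d) (Fin d) ℝ) (u : Fin d → ℝ)
    (η : ℝ) (hη : 1 ≤ η)
    (hQ : Q.PosDef) (hH : H.PosDef)
    (hQH : (Q - H).PosSemidef) (hηH : (η • H - Q).PosSemidef)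
    (hu : (Q - H).mulVec u ≠ 0) :
    (SR1 Q H u - H).PosSemidef ∧ (η • H - SR1 Q H u).PosSemidef :=
  sr1_preserves_sandwich_general Q H u η hQH hηH
end

section
/- Let Q and H be symmetric d×d matrices with Q − H ⪰ 0 and rank(Q − H) = r ≥ 1, and let u ∈ ℝᵈ with (Q−H)u ≠ 0. Then rank(SR1(Q,H,u) − H) ≤ r − 1. -/
open Matrix

/-- each SR1 update strictly decreases the rank of the residual Q − H. -/
theorem sr1_rank_decrease {d : ℕ} (Q H : Matrix (Fin d) (Fin d) ℝ) (u : Fin d → ℝ)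
    (hQ : Q.IsSymm) (hH : H.IsSymm)
    (hQH : (Q - H).PosSemidef) (r : ℕ) (hr : (Q - H).rank = r) (hr1 : 1 ≤ r)
    (hu : (Q - H).mulVec u ≠ 0) :
    (SR1 Q H u - H).rank ≤ r - 1 := by
  set A := Q - H with hA
  set v := A.mulVec u with hv
  set c := u ⬝ᵥ v with hc
  have hAsymm : Aᵀ = A := by
    rw [hA, Matrix.transpose_sub, hQ.eq, hH.eq]
  have hc0 : c ≠ 0 := by
    intro h
    apply hu
    rw [← hQH.dotProduct_mulVec_zero_iff u]
    simpa using h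
  have hM : SR1 Q H u - H = A - c⁻¹ • vecMulVec v v := by
    rw [SR1, hA]; ring_nf; rw [sub_right_comm]
  set M := A - c⁻¹ • vecMulVec v v with hMdef
  -- vecMulVec mulVec
  have hvvmul : ∀ x : Fin d → ℝ, (vecMulVec v v).mulVec x = (v ⬝ᵥ x) • v := by
    intro x
    funext i
    simp [vecMulVec_apply, mulVec, dotProduct, Finset.mul_sum, mul_comm, mul_left_comm]
  have hMmul : ∀ x : Fin d → ℝ, M.mulVec x = A.mulVec x - (c⁻¹ * (v ⬝ᵥ x)) • v := by
    intro x
    rw [hMdef, Matrix.sub_mulVec, Matrix.smul_mulVec, hvvmul, smul_smul]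
  -- M u = 0
  have hMu : M.mulVec u = 0 := by
    rw [hMmul]
    have : v ⬝ᵥ u = c := by rw [hc, dotProduct_comm]
    rw [this, inv_mul_cancel₀ hc0, one_smul, hv, sub_self]
  -- ker A ⊆ ker M
  have hker : ∀ x : Fin d → ℝ, A.mulVec x = 0 → M.mulVec x = 0 := by
    intro x hx
    have hvx : v ⬝ᵥ x = 0 := by
      rw [hv, dotProduct_comm, dotProduct_mulVec, ← Matrix.mulVec_transpose, hAsymm, hx,
        zero_dotProduct]
    rw [hMmul, hx, hvx, mul_zero, zero_smul, sub_zero]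
  -- kernel submodules
  have hle : LinearMap.ker A.mulVecLin ⊔ Submodule.span ℝ {u} ≤ LinearMap.ker M.mulVecLin := by
    rw [sup_le_iff]
    constructor
    · intro x hx
      exact hker x hx
    · rw [Submodule.span_singleton_le_iff_mem]
      exact hMu
  have hlt : LinearMap.ker A.mulVecLin < LinearMap.ker A.mulVecLin ⊔ Submodule.span ℝ {u} := by
    refine lt_of_le_of_ne le_sup_left ?_
    intro h
    have : u ∈ LinearMap.ker A.mulVecLin := by
      rw [h]
      exact Submodule.mem_sup_right (Submodule.mem_span_singleton_self u)
    exact hu this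
  have hdim : Module.finrank ℝ (LinearMap.ker A.mulVecLin) <
      Module.finrank ℝ (LinearMap.ker M.mulVecLin) :=
    lt_of_lt_of_le (Submodule.finrank_lt_finrank_of_lt hlt)
      (Submodule.finrank_mono hle)
  have hrankA : A.rank + Module.finrank ℝ (LinearMap.ker A.mulVecLin) = d := by
    simpa [Matrix.rank] using LinearMap.finrank_range_add_finrank_ker A.mulVecLin
  have hrankM : M.rank + Module.finrank ℝ (LinearMap.ker M.mulVecLin) = d := by
    simpa [Matrix.rank] using LinearMap.finrank_range_add_finrank_ker M.mulVecLin
  rw [hM]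
  omega
end

section
/- Let Q and H be symmetric d×d matrices with Q ⪰ H. Define the greedy SR1 iteration: Q₀ = Q, and Q_{k+1} = SR1(Q_k, H, u_k) where u_k is a standard basis vector maximizing u_kᵀ(Q_k − H)u_k (and Q_{k+1} = Q_k if Q_k = H). Then there exists 0 ≤ k ≤ d with Q_k = H. -/
/-!
The residual `Q - H` stays positive semidefinite along the iteration, since `SR1 Q H u - H` is
Wedderburn's rank-one reduction of `Q - H` along `u`, and each reduction with `uᵀ (Q - H) u ≠ 0`
strictly lowers the rank. A positive semidefinite matrix with vanishing diagonal vanishes, so as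
long as `Q k ≠ H` the greedy pivot has `uᵀ (Q k - H) u > 0`; hence the rank of `Q k - H`, at most
`d`, reaches zero within `d` steps.
-/

open Matrix

namespace Matrix

variable {n K : Type*} [Fintype n]

section Field

variable [Field K] (A : Matrix n n K) (u : n → K)

/-- Wedderburn's rank-one reduction of `A` along `u`; when `uᵀ A u = 0` the junk value `0⁻¹ = 0`
makes it `A` itself. -/
noncomputable def wedderburnReduction : Matrix n n K :=
  A - (u ⬝ᵥ A *ᵥ u)⁻¹ • vecMulVec (A *ᵥ u) (A *ᵥ u)

theorem wedderburnReduction_mulVec (x : n → K) :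
    wedderburnReduction A u *ᵥ x = A *ᵥ (x - ((u ⬝ᵥ A *ᵥ u)⁻¹ * (A *ᵥ u ⬝ᵥ x)) • u) := by
  rw [wedderburnReduction, sub_mulVec, smul_mulVec, vecMulVec_mulVec, mulVec_sub, mulVec_smul,
    op_smul_eq_smul, smul_smul]

theorem wedderburnReduction_mulVec_self (hc : u ⬝ᵥ A *ᵥ u ≠ 0) :
    wedderburnReduction A u *ᵥ u = 0 := by
  rw [wedderburnReduction_mulVec, dotProduct_comm (A *ᵥ u), inv_mul_cancel₀ hc, one_smul,
    sub_self, mulVec_zero]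

variable {A}

theorem IsSymm.wedderburnReduction (hA : A.IsSymm) : (A.wedderburnReduction u).IsSymm :=
  hA.sub (IsSymm.smul (by simp [IsSymm, transpose_vecMulVec]) _)

theorem IsSymm.dotProduct_wedderburnReduction_mulVec (hA : A.IsSymm) (hc : u ⬝ᵥ A *ᵥ u ≠ 0)
    (x : n → K) : u ⬝ᵥ A.wedderburnReduction u *ᵥ x = 0 := by
  rw [dotProduct_mulVec, ← mulVec_transpose, (hA.wedderburnReduction u).eq,
    wedderburnReduction_mulVec_self A u hc, zero_dotProduct]

theorem IsSymm.rank_wedderburnReduction_lt (hA : A.IsSymm) (hc : u ⬝ᵥ A *ᵥ u ≠ 0) :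
    (A.wedderburnReduction u).rank < A.rank := by
  refine Submodule.finrank_lt_finrank_of_lt (lt_of_le_of_ne ?_ fun h => hc ?_)
  · rintro _ ⟨x, rfl⟩
    exact ⟨_, (wedderburnReduction_mulVec A u x).symm⟩
  · obtain ⟨y, hy⟩ : A *ᵥ u ∈ LinearMap.range (A.wedderburnReduction u).mulVecLin :=
      h ▸ LinearMap.mem_range_self _ u
    rw [mulVecLin_apply] at hy
    rw [← hy, hA.dotProduct_wedderburnReduction_mulVec u hc]

theorem eq_zero_of_rank_eq_zero {m : Type*} [DecidableEq n] {A : Matrix m n K} (h : A.rank = 0) :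
    A = 0 := by
  rw [rank, Submodule.finrank_eq_zero, LinearMap.range_eq_bot] at h
  exact toLin'.injective (by rw [map_zero, toLin'_apply', h])

end Field

theorem PosSemidef.wedderburnReduction {A : Matrix n n ℝ} (hA : A.PosSemidef) (u : n → ℝ) :
    (A.wedderburnReduction u).PosSemidef := by
  by_cases hc : u ⬝ᵥ A *ᵥ u = 0
  · simpa [Matrix.wedderburnReduction, hc] using hA
  have hsymm : A.IsSymm := isHermitian_iff_isSymm.1 hA.isHermitian
  refine .of_dotProduct_mulVec_nonneg (isHermitian_iff_isSymm.2 (hsymm.wedderburnReduction u))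
    fun x => ?_
  set y := x - ((u ⬝ᵥ A *ᵥ u)⁻¹ * (A *ᵥ u ⬝ᵥ x)) • u
  calc 0 ≤ star y ⬝ᵥ A *ᵥ y := hA.dotProduct_mulVec_nonneg y
    _ = y ⬝ᵥ A.wedderburnReduction u *ᵥ x := by rw [wedderburnReduction_mulVec, star_trivial]
    _ = star x ⬝ᵥ A.wedderburnReduction u *ᵥ x := by
      rw [sub_dotProduct, smul_dotProduct, hsymm.dotProduct_wedderburnReduction_mulVec u hc,
        smul_zero, sub_zero, star_trivial]

theorem PosSemidef.diag_pos_of_forall_diag_le {A : Matrix n n ℝ} (hA : A.PosSemidef) (hA0 : A ≠ 0)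
    {i : n} (hi : ∀ j, A j j ≤ A i i) : 0 < A i i := by
  refine hA.diag_nonneg.lt_of_ne fun h => hA0 (hA.trace_eq_zero_iff.1 ?_)
  exact Finset.sum_eq_zero fun j _ => le_antisymm (h ▸ hi j) hA.diag_nonneg

end Matrix

theorem SR1_sub {d : ℕ} (Q H : Matrix (Fin d) (Fin d) ℝ) (u : Fin d → ℝ) :
    SR1 Q H u - H = (Q - H).wedderburnReduction u :=
  sub_right_comm _ _ _

theorem greedy_sr1_finite_termination_general {d : ℕ} (H : Matrix (Fin d) (Fin d) ℝ)
    (Q : ℕ → Matrix (Fin d) (Fin d) ℝ)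
    (hQ0 : (Q 0 - H).PosSemidef)
    (hstep : ∀ k : ℕ,
      (Q k = H ∧ Q (k + 1) = Q k) ∨
      (Q k ≠ H ∧ ∃ i : Fin d,
        (∀ j : Fin d, (Q k - H) j j ≤ (Q k - H) i i) ∧
        Q (k + 1) = SR1 (Q k) H (Pi.single i 1))) :
    ∃ k : ℕ, k ≤ d ∧ Q k = H := by
  have residual : ∀ k, (Q k - H).PosSemidef ∧ (Q k - H).rank ≤ d - k := by
    intro k
    induction k with
    | zero => exact ⟨hQ0, by simpa using rank_le_width (Q 0 - H)⟩
    | succ k ih =>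
      obtain ⟨hpsd, hrank⟩ := ih
      rcases hstep k with ⟨hk, hnext⟩ | ⟨hne, i, hmax, hnext⟩
      · rw [hnext, hk, sub_self, rank_zero]
        exact ⟨.zero, Nat.zero_le _⟩
      · have hpivot : 0 < (Q k - H) i i := hpsd.diag_pos_of_forall_diag_le (sub_ne_zero.2 hne) hmax
        have hlt := (isHermitian_iff_isSymm.1 hpsd.isHermitian).rank_wedderburnReduction_lt
          (Pi.single i 1) (by simpa using hpivot.ne')
        rw [hnext, SR1_sub]
        exact ⟨hpsd.wedderburnReduction _, by omega⟩
  refine ⟨d, le_rfl, sub_eq_zero.1 (eq_zero_of_rank_eq_zero ?_)⟩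
  simpa using (residual d).2

/-- the greedy SR1 iteration (picking the standard basis vector with
the largest diagonal entry of Q_k − H) recovers H in at most d steps. -/
theorem greedy_sr1_finite_termination {d : ℕ} (H : Matrix (Fin d) (Fin d) ℝ)
    (hH : H.IsSymm) (Q : ℕ → Matrix (Fin d) (Fin d) ℝ)
    (hQ0sym : (Q 0).IsSymm) (hQ0 : (Q 0 - H).PosSemidef)
    (hstep : ∀ k : ℕ,
      (Q k = H ∧ Q (k + 1) = Q k) ∨
      (Q k ≠ H ∧ ∃ i : Fin d,
        (∀ j : Fin d, (Q k - H) j j ≤ (Q k - H) i i) ∧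
        Q (k + 1) = SR1 (Q k) H (Pi.single i 1))) :
    ∃ k : ℕ, k ≤ d ∧ Q k = H :=
  greedy_sr1_finite_termination_general H Q hQ0 hstep
end

section
/- Let Q, H ∈ 𝕊^d_{++} with H ⪯ Q ⪯ ηH (η ≥ 1) and u ∈ ℝᵈ with Hu ≠ 0 and uᵀQu ≠ uᵀHu. Then the BFGS update BFGS(Q,H,u) = Q − (Quuᵀ Q)/(uᵀQu) + (Huuᵀ H)/(uᵀHu) satisfies H ⪯ BFGS(Q,H,u) ⪯ ηH. -/
/-!
Both inequalities are checked on quadratic forms. If `D` is the positive semidefinite gap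
(`Q - H` for the lower bound, `η • H - Q` for the upper one), Cauchy–Schwarz for `D` gives
`(xᵀDu)² ≤ (xᵀDx)(uᵀDu)`, and what remains is the two-term Sedrakyan inequality
`(p + q)² / (b + c) ≤ p² / b + q² / c`. For the lower bound it is used with `b = uᵀHu`,
`b + c = uᵀQu`; for the upper one with `b = uᵀQu`, `b + c = η uᵀHu`, after which `η ≥ 1`
finishes, since `(η p)² / (η b) = η p² / b`.
-/

open Matrix

/-- The BFGS update. -/
noncomputable def BFGS {d : ℕ} (Q H : Matrix (Fin d) (Fin d) ℝ) (u : Fin d → ℝ) :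
    Matrix (Fin d) (Fin d) ℝ :=
  Q - (u ⬝ᵥ Q.mulVec u)⁻¹ • vecMulVec (Q.mulVec u) (Q.mulVec u)
    + (u ⬝ᵥ H.mulVec u)⁻¹ • vecMulVec (H.mulVec u) (H.mulVec u)

theorem Matrix.PosSemidef.dotProduct_mulVec_sq_le_s9 {n : Type*} [Fintype n] [DecidableEq n]
    {D : Matrix n n ℝ} (hD : D.PosSemidef) (x y : n → ℝ) :
    (x ⬝ᵥ D *ᵥ y) ^ 2 ≤ (x ⬝ᵥ D *ᵥ x) * (y ⬝ᵥ D *ᵥ y) := by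
  have hsymm : LinearMap.IsSymm D.toBilin' :=
    LinearMap.BilinForm.isSymm_iff.1 <| isSymm_toBilin'_iff_isSymm.2 <|
      isHermitian_iff_isSymm.1 hD.1
  simpa only [toBilin'_apply'] using D.toBilin'.apply_sq_le_of_symm
    (fun v => by simpa only [toBilin'_apply', star_trivial] using hD.dotProduct_mulVec_nonneg v)
    hsymm x y

/-- Sedrakyan's inequality with `q² / c` replaced by any `X` with `q² ≤ X c`, so that `c = 0` is
allowed. -/
theorem add_sq_div_add_le_of_sq_le_mul {p q X b c : ℝ} (hb : 0 < b) (hc : 0 ≤ c) (hX : 0 ≤ X)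
    (hq : q ^ 2 ≤ X * c) : (p + q) ^ 2 / (b + c) ≤ p ^ 2 / b + X := by
  have hp : p ^ 2 = p ^ 2 / b * b := (div_mul_cancel₀ _ hb.ne').symm
  have hpq : 2 * (p * q) ≤ p ^ 2 / b * c + X * b := by
    refine two_mul_le_add_of_sq_le_mul (by positivity) (by positivity) ?_
    calc (p * q) ^ 2 = p ^ 2 / b * b * q ^ 2 := by rw [mul_pow, ← hp]
      _ ≤ p ^ 2 / b * b * (X * c) := by gcongr
      _ = p ^ 2 / b * c * (X * b) := by ring
  rw [div_le_iff₀ (by positivity)]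
  nlinarith

theorem isHermitian_smul_vecMulVec_self {n : Type*} (c : ℝ) (w : n → ℝ) :
    (c • vecMulVec w w).IsHermitian :=
  (isHermitian_iff_isSymm.2 (transpose_vecMulVec w w)).smul (IsSelfAdjoint.all c)

theorem BFGS_isHermitian {d : ℕ} {Q : Matrix (Fin d) (Fin d) ℝ} (H : Matrix (Fin d) (Fin d) ℝ)
    (u : Fin d → ℝ) (hQ : Q.IsHermitian) : (BFGS Q H u).IsHermitian :=
  (hQ.sub (isHermitian_smul_vecMulVec_self _ _)).add (isHermitian_smul_vecMulVec_self _ _)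

theorem dotProduct_BFGS_mulVec {d : ℕ} (Q H : Matrix (Fin d) (Fin d) ℝ) (u x : Fin d → ℝ) :
    x ⬝ᵥ BFGS Q H u *ᵥ x = x ⬝ᵥ Q *ᵥ x - (x ⬝ᵥ Q *ᵥ u) ^ 2 / (u ⬝ᵥ Q *ᵥ u)
      + (x ⬝ᵥ H *ᵥ u) ^ 2 / (u ⬝ᵥ H *ᵥ u) := by
  simp only [BFGS, add_mulVec, sub_mulVec, smul_mulVec, vecMulVec_mulVec, op_smul_eq_smul,
    dotProduct_add, dotProduct_sub, dotProduct_smul, smul_eq_mul, dotProduct_comm _ x]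
  ring

theorem posSemidef_BFGS_sub {d : ℕ} {Q H : Matrix (Fin d) (Fin d) ℝ} {u : Fin d → ℝ}
    (hQ : Q.IsHermitian) (hH : H.PosDef) (hQH : (Q - H).PosSemidef) (hu : u ≠ 0) :
    (BFGS Q H u - H).PosSemidef := by
  refine .of_dotProduct_mulVec_nonneg ((BFGS_isHermitian H u hQ).sub hH.1) fun x => ?_
  have hb : 0 < u ⬝ᵥ H *ᵥ u := by simpa using hH.dotProduct_mulVec_pos hu
  have key := add_sq_div_add_le_of_sq_le_mul (p := x ⬝ᵥ H *ᵥ u) hb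
    (hQH.dotProduct_mulVec_nonneg u) (hQH.dotProduct_mulVec_nonneg x)
    (hQH.dotProduct_mulVec_sq_le_s9 x u)
  simp only [star_trivial, sub_mulVec, dotProduct_sub, add_sub_cancel] at key ⊢
  rw [dotProduct_BFGS_mulVec]
  linarith

theorem posSemidef_smul_sub_BFGS {d : ℕ} {Q H : Matrix (Fin d) (Fin d) ℝ} {u : Fin d → ℝ}
    {η : ℝ} (hη : 1 ≤ η) (hQ : Q.PosDef) (hH : H.IsHermitian)
    (hQη : (η • H - Q).PosSemidef) (hu : u ≠ 0) : (η • H - BFGS Q H u).PosSemidef := by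
  refine .of_dotProduct_mulVec_nonneg
    ((hH.smul (IsSelfAdjoint.all η)).sub (BFGS_isHermitian H u hQ.1)) fun x => ?_
  have ha : 0 < u ⬝ᵥ Q *ᵥ u := by simpa using hQ.dotProduct_mulVec_pos hu
  have hs := hQη.dotProduct_mulVec_nonneg u
  have key := add_sq_div_add_le_of_sq_le_mul (p := x ⬝ᵥ Q *ᵥ u) ha hs
    (hQη.dotProduct_mulVec_nonneg x) (hQη.dotProduct_mulVec_sq_le_s9 x u)
  simp only [star_trivial, sub_mulVec, smul_mulVec, dotProduct_sub, dotProduct_smul, smul_eq_mul,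
    add_sub_cancel] at hs key ⊢
  have hb : 0 < u ⬝ᵥ H *ᵥ u := pos_of_mul_pos_right (by linarith) (by linarith : 0 ≤ η)
  have hscale : (x ⬝ᵥ H *ᵥ u) ^ 2 / (u ⬝ᵥ H *ᵥ u) ≤
      (η * (x ⬝ᵥ H *ᵥ u)) ^ 2 / (η * (u ⬝ᵥ H *ᵥ u)) := by
    rw [mul_pow, sq η, mul_assoc, mul_div_mul_left _ _ (by positivity : η ≠ 0), mul_div_assoc]
    exact le_mul_of_one_le_left (by positivity) hη
  rw [dotProduct_BFGS_mulVec]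
  linarith

theorem bfgs_preserves_sandwich_general {d : ℕ} (Q H : Matrix (Fin d) (Fin d) ℝ) (u : Fin d → ℝ)
    (η : ℝ) (hη : 1 ≤ η)
    (hQ : Q.PosDef) (hH : H.PosDef)
    (hQH : (Q - H).PosSemidef) (hηH : (η • H - Q).PosSemidef)
    (hu : H.mulVec u ≠ 0) :
    (BFGS Q H u - H).PosSemidef ∧ (η • H - BFGS Q H u).PosSemidef := by
  have hu0 : u ≠ 0 := by
    rintro rfl
    exact hu (mulVec_zero H)
  exact ⟨posSemidef_BFGS_sub hQ.1 hH hQH hu0, posSemidef_smul_sub_BFGS hη hQ hH.1 hηH hu0⟩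

/-- the BFGS update preserves the sandwich H ⪯ Q ⪯ ηH. -/
theorem bfgs_preserves_sandwich {d : ℕ} (Q H : Matrix (Fin d) (Fin d) ℝ) (u : Fin d → ℝ)
    (η : ℝ) (hη : 1 ≤ η)
    (hQ : Q.PosDef) (hH : H.PosDef)
    (hQH : (Q - H).PosSemidef) (hηH : (η • H - Q).PosSemidef)
    (hu : H.mulVec u ≠ 0) (huQH : u ⬝ᵥ Q.mulVec u ≠ u ⬝ᵥ H.mulVec u) :
    (BFGS Q H u - H).PosSemidef ∧ (η • H - BFGS Q H u).PosSemidef :=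
  bfgs_preserves_sandwich_general Q H u η hη hQ hH hQH hηH hu
end

section
/- Let H̃ ∈ ℝ^{d×d} be symmetric and invertible with H̃² ⪰ μ²I, and let Q ∈ 𝕊^d_{++} satisfy H̃² ⪯ Q ⪯ η H̃² for some η ≥ 1. Then for any g ∈ ℝᵈ, the Newton-type residual satisfies ‖g − H̃ Q⁻¹ H̃ g‖ ≤ (1 − 1/η)‖g‖. -/
/-!
With `H = H̃²`, inversion being operator antitone turns `H ⪯ Q ⪯ ηH` into
`η⁻¹H⁻¹ ⪯ Q⁻¹ ⪯ H⁻¹`, and conjugating by the symmetric `H̃` (where `H̃H⁻¹H̃ = I`) gives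
`η⁻¹I ⪯ H̃Q⁻¹H̃ ⪯ I`. Hence the residual map `I - H̃Q⁻¹H̃` lies between `0` and `(1 - 1/η)I`,
and a positive operator below `c • I` has norm at most `c`, its norm being the supremum of its
Rayleigh quotient.
-/

open Matrix
open scoped MatrixOrder ComplexOrder

namespace ContinuousLinearMap

variable {𝕜 E : Type*} [RCLike 𝕜] [NormedAddCommGroup E] [InnerProductSpace 𝕜 E]

theorem IsPositive.norm_le {T : E →L[𝕜] E} (hT : T.IsPositive) {c : ℝ} (hc : 0 ≤ c)
    (hTc : T ≤ (c : 𝕜) • 1) : ‖T‖ ≤ c := by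
  rw [T.norm_eq_iSup_rayleighQuotient hT.isSymmetric]
  refine ciSup_le fun x => ?_
  have hlow := hT.re_inner_nonneg_left x
  have hup := hTc.re_inner_nonneg_left x
  simp only [_root_.sub_apply, _root_.smul_apply, one_apply_eq_self, inner_sub_left,
    inner_smul_left, map_sub, RCLike.conj_ofReal, RCLike.re_ofReal_mul, inner_self_eq_norm_sq,
    sub_nonneg] at hup
  rw [rayleighQuotient, reApplyInnerSelf_apply, abs_of_nonneg (div_nonneg hlow (sq_nonneg _))]
  exact div_le_of_le_mul₀ (by positivity) hc hup

end ContinuousLinearMap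

namespace Matrix
variable {𝕜 n : Type*} [RCLike 𝕜] [Fintype n] [DecidableEq n]

theorem inv_sub_inv_eq_conj {A B : Matrix n n 𝕜} (hA : IsUnit A) (hB : IsUnit B) :
    A⁻¹ - B⁻¹ = B⁻¹ * ((B - A) + (B - A) * A⁻¹ * (B - A)) * B⁻¹ := by
  have hA' : IsUnit A.det := (isUnit_iff_isUnit_det A).mp hA
  have hB' : IsUnit B.det := (isUnit_iff_isUnit_det B).mp hB
  simp only [Matrix.mul_add, Matrix.add_mul, Matrix.mul_sub, Matrix.sub_mul, Matrix.mul_assoc,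
    nonsing_inv_mul _ hA', nonsing_inv_mul _ hB', mul_nonsing_inv _ hA', mul_nonsing_inv _ hB',
    Matrix.mul_one, Matrix.one_mul, nonsing_inv_mul_cancel_left _ _ hB']
  abel

theorem PosDef.inv_le_inv {A B : Matrix n n 𝕜} (hA : A.PosDef) (hAB : A ≤ B) : B⁻¹ ≤ A⁻¹ := by
  have hB : B.PosDef := by simpa using hA.add_posSemidef hAB
  have hD : 0 ≤ B - A := sub_nonneg.mpr hAB
  rw [← sub_nonneg, inv_sub_inv_eq_conj hA.isUnit hB.isUnit]
  exact IsSelfAdjoint.conjugate_nonneg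
    (add_nonneg hD (IsSelfAdjoint.conjugate_nonneg hA.inv.posSemidef.nonneg hD.isSelfAdjoint))
    hB.inv.isHermitian

theorem posDef_mul_self {T : Matrix n n 𝕜} (hT : IsSelfAdjoint T) (hTu : IsUnit T) :
    (T * T).PosDef := by
  have := PosDef.conjTranspose_mul_self T (mulVec_injective_of_isUnit hTu)
  rwa [← star_eq_conjTranspose, hT.star_eq] at this

theorem mul_inv_mul_self_mul_eq_one {T : Matrix n n 𝕜} (hTu : IsUnit T) :
    T * (T * T)⁻¹ * T = 1 := by
  have hT' : IsUnit T.det := (isUnit_iff_isUnit_det T).mp hTu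
  rw [mul_inv_rev, Matrix.mul_assoc, Matrix.mul_assoc, nonsing_inv_mul _ hT', Matrix.mul_one,
    mul_nonsing_inv _ hT']

theorem inv_real_smul {A : Matrix n n 𝕜} (hA : IsUnit A) {c : ℝ} (hc : c ≠ 0) :
    (c • A)⁻¹ = c⁻¹ • A⁻¹ := by
  have hA' : IsUnit A.det := (isUnit_iff_isUnit_det A).mp hA
  refine inv_eq_right_inv ?_
  rw [smul_mul_smul_comm, mul_inv_cancel₀ hc, one_smul, mul_nonsing_inv _ hA']

theorem mul_inv_mul_mem_Icc {T Q : Matrix n n 𝕜} (hT : IsSelfAdjoint T) (hTu : IsUnit T) {η : ℝ}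
    (hη : 0 < η) (h1 : T * T ≤ Q) (h2 : Q ≤ η • (T * T)) :
    T * Q⁻¹ * T ∈ Set.Icc (η⁻¹ • 1) 1 := by
  have hTT := posDef_mul_self hT hTu
  have hQ : Q.PosDef := by simpa using hTT.add_posSemidef h1
  constructor
  · have := hT.conjugate_le_conjugate (hQ.inv_le_inv h2)
    rwa [inv_real_smul hTT.isUnit hη.ne', Matrix.mul_smul, Matrix.smul_mul,
      mul_inv_mul_self_mul_eq_one hTu] at this
  · simpa [mul_inv_mul_self_mul_eq_one hTu] using hT.conjugate_le_conjugate (hTT.inv_le_inv h1)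

theorem isPositive_toEuclideanCLM_iff {A : Matrix n n 𝕜} :
    (toEuclideanCLM (n := n) (𝕜 := 𝕜) A).IsPositive ↔ A.PosSemidef := by
  rw [← ContinuousLinearMap.isPositive_toLinearMap_iff, coe_toEuclideanCLM_eq_toEuclideanLin,
    isPositive_toEuclideanLin_iff]

theorem norm_toEuclideanCLM_le {M : Matrix n n 𝕜} {c : ℝ} (hc : 0 ≤ c) (hM : 0 ≤ M)
    (hMc : M ≤ c • 1) : ‖toEuclideanCLM (n := n) (𝕜 := 𝕜) M‖ ≤ c := by
  refine (isPositive_toEuclideanCLM_iff.mpr hM.posSemidef).norm_le hc ?_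
  have := isPositive_toEuclideanCLM_iff.mpr (sub_nonneg.mpr hMc).posSemidef
  rwa [map_sub, RCLike.real_smul_eq_coe_smul (K := 𝕜), map_smul, map_one] at this

end Matrix

theorem newton_residual_contraction_general {d : ℕ} (Ht Q : Matrix (Fin d) (Fin d) ℝ)
    (η : ℝ) (hη : 1 ≤ η)
    (hsym : Ht.IsSymm) (hinv : IsUnit Ht)
    (h1 : (Q - Ht ^ 2).PosSemidef) (h2 : (η • Ht ^ 2 - Q).PosSemidef)
    (g : EuclideanSpace ℝ (Fin d)) :
    ‖g - Matrix.toEuclideanCLM (𝕜 := ℝ) (Ht * Q⁻¹ * Ht) g‖ ≤ (1 - 1 / η) * ‖g‖ := by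
  have hHt : IsSelfAdjoint Ht := isHermitian_iff_isSymm.mpr hsym
  have hη0 : 0 < η := zero_lt_one.trans_le hη
  rw [sq] at h1 h2
  obtain ⟨hlow, hup⟩ := mul_inv_mul_mem_Icc hHt hinv hη0 h1 h2
  have hc : 0 ≤ 1 - 1 / η := sub_nonneg.mpr ((div_le_one hη0).mpr hη)
  have hres : 1 - Ht * Q⁻¹ * Ht ≤ (1 - 1 / η) • 1 := by
    rw [sub_smul, one_smul, one_div]
    exact sub_le_sub_left hlow 1
  calc ‖g - Matrix.toEuclideanCLM (𝕜 := ℝ) (Ht * Q⁻¹ * Ht) g‖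
      = ‖Matrix.toEuclideanCLM (𝕜 := ℝ) (1 - Ht * Q⁻¹ * Ht) g‖ := by simp
    _ ≤ (1 - 1 / η) * ‖g‖ :=
      (ContinuousLinearMap.le_opNorm _ _).trans (mul_le_mul_of_nonneg_right
        (norm_toEuclideanCLM_le hc (sub_nonneg.mpr hup) hres) (norm_nonneg g))

/-- Newton-type residual contraction.  If H̃ is symmetric invertible with
H̃² ⪰ μ²I and H̃² ⪯ Q ⪯ ηH̃², then ‖g − H̃Q⁻¹H̃g‖ ≤ (1 − 1/η)‖g‖. -/
theorem newton_residual_contraction {d : ℕ} (Ht Q : Matrix (Fin d) (Fin d) ℝ)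
    (μ η : ℝ) (hμ : 0 < μ) (hη : 1 ≤ η)
    (hsym : Ht.IsSymm) (hinv : IsUnit Ht)
    (hlb : (Ht ^ 2 - μ ^ 2 • (1 : Matrix (Fin d) (Fin d) ℝ)).PosSemidef)
    (hQ : Q.PosDef)
    (h1 : (Q - Ht ^ 2).PosSemidef) (h2 : (η • Ht ^ 2 - Q).PosSemidef)
    (g : EuclideanSpace ℝ (Fin d)) :
    ‖g - Matrix.toEuclideanCLM (𝕜 := ℝ) (Ht * Q⁻¹ * Ht) g‖ ≤ (1 - 1 / η) * ‖g‖ :=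
  newton_residual_contraction_general Ht Q η hη hsym hinv h1 h2 g
end
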